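/- Let G and H be connected graphs each with matching number 1 (i.e., each is a triangle or a star). Then G ⊠ H is well-edge-dominated if and only if both G and H are K_2. -/

import Mathlib

open SimpleGraph

variable {V : Type*} {W : Type*}

/-- The strong product of two simple graphs. -/
def strongProd (G : SimpleGraph V) (H : SimpleGraph W) : SimpleGraph (V × W) where
  Adj x y := x ≠ y ∧ (x.1 = y.1 ∨ G.Adj x.1 y.1) ∧ (x.2 = y.2 ∨ H.Adj x.2 y.2)
  symm := ⟨fun x y ⟨hne, h1, h2⟩ =>
    ⟨hne.symm, h1.imp Eq.symm (fun h => h.symm), h2.imp Eq.symm (fun h => h.symm)⟩⟩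
  loopless := ⟨fun x h => h.1 rfl⟩

/-- A dominating set: every vertex outside has a neighbor inside. -/
def IsDomSet (G : SimpleGraph V) (D : Set V) : Prop :=
  ∀ v, v ∉ D → ∃ u ∈ D, G.Adj u v

/-- A minimal dominating set. -/
def IsMinlDomSet (G : SimpleGraph V) (D : Set V) : Prop :=
  IsDomSet G D ∧ ∀ D', D' ⊂ D → ¬ IsDomSet G D'

/-- A graph is well-dominated if every minimal dominating set has minimum cardinality. -/
def WellDominated (G : SimpleGraph V) : Prop :=
  ∀ D D' : Set V, IsMinlDomSet G D → IsDomSet G D' → D.ncard ≤ D'.ncard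

/-- The domination number. -/
noncomputable def domNum (G : SimpleGraph V) : ℕ :=
  sInf {n | ∃ D : Set V, IsDomSet G D ∧ D.ncard = n}

/-- The closed neighborhood of a vertex. -/
def closedNbhd (G : SimpleGraph V) (v : V) : Set V := insert v (G.neighborSet v)

/-- `G` is trivially well-dominated via the vertices `u 0, …, u (t-1)`:
their closed neighborhoods are cliques and partition `V`. -/
def TriviallyWellDominatedWith (G : SimpleGraph V) {t : ℕ} (u : Fin t → V) : Prop :=
  (∀ i, G.IsClique (closedNbhd G (u i))) ∧ (∀ v : V, ∃! i, v ∈ closedNbhd G (u i))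

def TriviallyWellDominated (G : SimpleGraph V) : Prop :=
  ∃ (t : ℕ) (u : Fin t → V), TriviallyWellDominatedWith G u

/-- An edge dominating set: every edge of `G` not in `F` shares an endpoint
with some edge of `F`. -/
def IsEDS (G : SimpleGraph V) (F : Set (Sym2 V)) : Prop :=
  F ⊆ G.edgeSet ∧ ∀ e ∈ G.edgeSet, e ∉ F → ∃ f ∈ F, ∃ v, v ∈ e ∧ v ∈ f

/-- A minimal edge dominating set. -/
def IsMinlEDS (G : SimpleGraph V) (F : Set (Sym2 V)) : Prop :=
  IsEDS G F ∧ ∀ F', F' ⊂ F → ¬ IsEDS G F'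

/-- Well-edge-dominated: every minimal edge dominating set has minimum cardinality. -/
def WellEdgeDominated (G : SimpleGraph V) : Prop :=
  ∀ F F' : Set (Sym2 V), IsMinlEDS G F → IsEDS G F' → F.ncard ≤ F'.ncard

/-- A matching, as a set of pairwise nonadjacent edges. -/
def IsMatchingSet (G : SimpleGraph V) (M : Set (Sym2 V)) : Prop :=
  M ⊆ G.edgeSet ∧ ∀ e ∈ M, ∀ f ∈ M, e ≠ f → ∀ v : V, ¬ (v ∈ e ∧ v ∈ f)

/-- A maximal matching. -/
def IsMaxlMatching (G : SimpleGraph V) (M : Set (Sym2 V)) : Prop :=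
  IsMatchingSet G M ∧ ∀ M', M ⊆ M' → IsMatchingSet G M' → M' = M

/-- A maximum matching. -/
def IsMaxMatching (G : SimpleGraph V) (M : Set (Sym2 V)) : Prop :=
  IsMatchingSet G M ∧ ∀ M', IsMatchingSet G M' → M'.ncard ≤ M.ncard

/-- Equimatchable: every maximal matching is maximum. -/
def Equimatchable (G : SimpleGraph V) : Prop :=
  ∀ M M' : Set (Sym2 V), IsMaxlMatching G M → IsMatchingSet G M' → M'.ncard ≤ M.ncard

/-- The set of endpoints of the edges of `M`. -/
def mVerts (M : Set (Sym2 V)) : Set V := {v | ∃ e ∈ M, v ∈ e}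

/-- A perfect matching covers every vertex. -/
def IsPerfectMatchingSet (G : SimpleGraph V) (M : Set (Sym2 V)) : Prop :=
  IsMatchingSet G M ∧ ∀ v : V, v ∈ mVerts M

/-- A near-perfect matching covers all vertices but exactly one. -/
def IsNearPerfectMatchingSet (G : SimpleGraph V) (M : Set (Sym2 V)) : Prop :=
  IsMatchingSet G M ∧ ∃ w : V, mVerts M = {w}ᶜ

/-- The matching number. -/
noncomputable def matchNum (G : SimpleGraph V) : ℕ :=
  sSup {n | ∃ M : Set (Sym2 V), IsMatchingSet G M ∧ M.ncard = n}

/-- The independence number. -/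
noncomputable def indepNum (G : SimpleGraph V) : ℕ :=
  sSup {n | ∃ S : Set V, (S.Pairwise fun u v => ¬ G.Adj u v) ∧ S.ncard = n}

/-- `G` with a set of vertices deleted (induced subgraph on the complement). -/
abbrev delVerts (G : SimpleGraph V) (S : Set V) : SimpleGraph ↥(Sᶜ) := G.induce Sᶜ

/-- Factor-critical: deleting any vertex leaves a graph with a perfect matching. -/
def FactorCritical (G : SimpleGraph V) : Prop :=
  ∀ v : V, ∃ M, IsPerfectMatchingSet (delVerts G {v}) M

/-- 2-connected: at least three vertices, connected, and no cutvertex. -/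
def TwoConnected (G : SimpleGraph V) [Fintype V] : Prop :=
  3 ≤ Fintype.card V ∧ G.Connected ∧ ∀ v : V, (delVerts G {v}).Connected

/-!
A connected graph with matching number 1 is a star or a triangle, so each factor has a
universal vertex and `(a, b)` is universal in `G ⊠ H`. If `z` is a universal vertex of a
graph `K` and `S` is a maximal independent set of `K - z`, the star joining `z` to every vertex
outside `S ∪ {z}` is a minimal edge dominating set, while a maximum matching is an edge
dominating set with at most `|K| / 2` edges; hence `K` is not well-edge-dominated once
`2 (|S| + 1) < |K|`. Unless both factors are `K₂`, such an `S` exists in `G ⊠ H`: a second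
universal vertex if a factor is complete and `|G ⊠ H| > 4`, and `{a} × (H - b)` if `H` is a star
centred at `b` and `|G| ≥ 3`. Conversely `K₂ ⊠ K₂ = K₄`, where two distinct edges always
dominate and a single edge never does.
-/

section EdgeDomination

variable {G : SimpleGraph V}

theorem isEDS_iff {F : Set (Sym2 V)} :
    IsEDS G F ↔
      F ⊆ G.edgeSet ∧ ∀ ⦃u v⦄, G.Adj u v → u ∈ mVerts F ∨ v ∈ mVerts F := by
  refine and_congr_right fun _ => ⟨fun h u v huv => ?_, fun h e he _ => ?_⟩
  · by_cases huvF : s(u, v) ∈ F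
    · exact .inl ⟨_, huvF, Sym2.mem_mk_left u v⟩
    · obtain ⟨f, hf, w, hw, hwf⟩ := h _ huv huvF
      rcases Sym2.mem_iff.mp hw with rfl | rfl
      · exact .inl ⟨f, hf, hwf⟩
      · exact .inr ⟨f, hf, hwf⟩
  · induction e using Sym2.ind with | _ u v => ?_
    rcases h he with ⟨f, hf, hu⟩ | ⟨f, hf, hv⟩
    · exact ⟨f, hf, u, Sym2.mem_mk_left u v, hu⟩
    · exact ⟨f, hf, v, Sym2.mem_mk_right u v, hv⟩

theorem mVerts_eq_biUnion (F : Set (Sym2 V)) : mVerts F = ⋃ e ∈ F, {v | v ∈ e} := by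
  ext v; simp [mVerts]

theorem ncard_mVerts_le [Finite V] (F : Set (Sym2 V)) : (mVerts F).ncard ≤ 2 * F.ncard := by
  have hF := Set.toFinite F
  calc (mVerts F).ncard ≤ ∑ e ∈ hF.toFinset, {v | v ∈ e}.ncard := by
        simpa [mVerts_eq_biUnion] using hF.toFinset.set_ncard_biUnion_le fun e => {v | v ∈ e}
    _ ≤ hF.toFinset.card • 2 := Finset.sum_le_card_nsmul _ _ _ fun e _ => by
        induction e using Sym2.ind with | _ u v => ?_
        simpa [Sym2.mem_iff, Set.ofPred_or] using Set.ncard_insert_le v {u}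
    _ = 2 * F.ncard := by rw [Set.ncard_eq_toFinset_card F hF, smul_eq_mul, mul_comm]

/-- Minimality: the edge from `t ∉ S ∪ {z}` to a neighbour in `S` is dominated only by
`s(z, t)`. -/
theorem isMinlEDS_star {z : V} (hz : G.IsUniversal z) {S : Set V} (hzS : z ∉ S)
    (hS : G.IsIndepSet S) (hmax : ∀ v, v ≠ z → v ∉ S → ∃ s ∈ S, G.Adj v s)
    (hT : (insert z S)ᶜ.Nonempty) :
    IsMinlEDS G (Sym2.mkEmbedding z '' (insert z S)ᶜ) := by
  have mem_mVerts_star {F : Set (Sym2 V)} (hF : F ⊆ Sym2.mkEmbedding z '' (insert z S)ᶜ)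
      {v : V} : v ∈ mVerts F ↔ ∃ t ∉ insert z S, s(z, t) ∈ F ∧ (v = z ∨ v = t) := by
    constructor
    · rintro ⟨f, hf, hv⟩
      obtain ⟨t, ht, rfl⟩ := hF hf
      exact ⟨t, ht, hf, Sym2.mem_iff.mp hv⟩
    · rintro ⟨t, -, htF, hv⟩
      exact ⟨_, htF, Sym2.mem_iff.mpr hv⟩
  constructor
  · refine isEDS_iff.mpr ⟨?_, fun u v huv => ?_⟩
    · rintro _ ⟨t, ht, rfl⟩
      exact hz (Ne.symm fun h => ht (.inl h))
    have mem_of_notMem {w : V} (hw : w ∉ S) :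
        w ∈ mVerts (Sym2.mkEmbedding z '' (insert z S)ᶜ) := by
      rw [mem_mVerts_star subset_rfl]
      by_cases hwz : w = z
      · obtain ⟨t, ht⟩ := hT
        exact ⟨t, ht, ⟨t, ht, rfl⟩, .inl hwz⟩
      · have hw' : w ∉ insert z S := by simp [hwz, hw]
        exact ⟨w, hw', ⟨w, hw', rfl⟩, .inr rfl⟩
    by_cases hu : u ∈ S
    · exact .inr (mem_of_notMem fun hv => hS hu hv huv.ne huv)
    · exact .inl (mem_of_notMem hu)
  · intro F hF hFeds
    obtain ⟨_, ⟨t, ht, rfl⟩, htF⟩ := Set.exists_of_ssubset hF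
    simp only [Set.mem_compl_iff, Set.mem_insert_iff, not_or] at ht
    obtain ⟨s, hs, hts⟩ := hmax t ht.1 ht.2
    rcases (isEDS_iff.mp hFeds).2 hts with h | h <;>
      obtain ⟨t', ht', ht'F, h | h⟩ := (mem_mVerts_star hF.subset).mp h
    · exact ht.1 h
    · exact htF (h ▸ ht'F)
    · exact hzS (h ▸ hs)
    · exact ht' (.inr (h ▸ hs))

end EdgeDomination

theorem IsMatchingSet.insert {G : SimpleGraph V} {M : Set (Sym2 V)} {e : Sym2 V}
    (hM : IsMatchingSet G M) (he : e ∈ G.edgeSet)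
    (hdisj : ∀ f ∈ M, ∀ v, v ∈ e → v ∉ f) : IsMatchingSet G (insert e M) := by
  refine ⟨Set.insert_subset he hM.1, ?_⟩
  rintro f (rfl | hf) g (rfl | hg) hfg v ⟨hvf, hvg⟩
  · exact hfg rfl
  · exact hdisj g hg v hvf hvg
  · exact hdisj f hf v hvg hvf
  · exact hM.2 f hf g hg hfg v ⟨hvf, hvg⟩

section Matching

variable [Finite V] {G : SimpleGraph V} {M : Set (Sym2 V)}

theorem bddAbove_ncard_isMatchingSet :
    BddAbove {n | ∃ M : Set (Sym2 V), IsMatchingSet G M ∧ M.ncard = n} :=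
  ⟨Nat.card (Sym2 V), by rintro _ ⟨M, -, rfl⟩; exact Set.ncard_le_card M⟩

theorem IsMatchingSet.ncard_le_matchNum (hM : IsMatchingSet G M) : M.ncard ≤ matchNum G :=
  le_csSup bddAbove_ncard_isMatchingSet ⟨M, hM, rfl⟩

theorem exists_isMatchingSet_ncard_eq_matchNum :
    ∃ M, IsMatchingSet G M ∧ M.ncard = matchNum G :=
  Nat.sSup_mem (s := {n | ∃ M : Set (Sym2 V), IsMatchingSet G M ∧ M.ncard = n})
    ⟨0, ∅, ⟨Set.empty_subset _, fun _ h => h.elim⟩, Set.ncard_empty _⟩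
    bddAbove_ncard_isMatchingSet

theorem IsMatchingSet.two_mul_ncard_le (hM : IsMatchingSet G M) : 2 * M.ncard ≤ Nat.card V := by
  have hcard : ∀ e ∈ M, {v | v ∈ e}.ncard = 2 := by
    intro e he
    induction e using Sym2.ind with | _ u v => ?_
    simpa [Sym2.mem_iff, Set.ofPred_or] using Set.ncard_pair (G.ne_of_adj (hM.1 he)).symm
  have hdisj : M.PairwiseDisjoint fun e => {v | v ∈ e} :=
    fun e he f hf hef => Set.disjoint_left.mpr fun v hve hvf => hM.2 e he f hf hef v ⟨hve, hvf⟩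
  calc 2 * M.ncard = ∑ᶠ e ∈ M, {v | v ∈ e}.ncard := by
        rw [finsum_mem_congr rfl hcard, ← finsum_one, mul_finsum_mem]; simp
    _ = (mVerts M).ncard := by
        rw [mVerts_eq_biUnion, (Set.toFinite M).ncard_biUnion (fun _ _ => Set.toFinite _) hdisj]
    _ ≤ Nat.card V := Set.ncard_le_card _

theorem exists_isEDS_two_mul_ncard_le : ∃ F, IsEDS G F ∧ 2 * F.ncard ≤ Nat.card V := by
  obtain ⟨M, hM, hMmax⟩ := exists_isMatchingSet_ncard_eq_matchNum (G := G)
  refine ⟨M, ⟨hM.1, fun e he heM => ?_⟩, hM.two_mul_ncard_le⟩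
  by_contra! hdisj
  have := (hM.insert he fun f hf v hve hvf => hdisj f hf v hve hvf).ncard_le_matchNum
  rw [Set.ncard_insert_of_notMem heM] at this
  omega

end Matching

theorem not_wellEdgeDominated_of_isUniversal [Finite V] {G : SimpleGraph V} {z : V}
    (hz : G.IsUniversal z) {S : Set V} (hzS : z ∉ S) (hS : G.IsIndepSet S)
    (hmax : ∀ v, v ≠ z → v ∉ S → ∃ s ∈ S, G.Adj v s)
    (hcard : 2 * (S.ncard + 1) < Nat.card V) :
    ¬ WellEdgeDominated G := by
  intro hwed
  have hT : (insert z S)ᶜ.ncard + (S.ncard + 1) = Nat.card V := by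
    rw [← Set.ncard_insert_of_notMem hzS, Set.ncard_compl_add_ncard]
  obtain ⟨F, hF, hFcard⟩ := exists_isEDS_two_mul_ncard_le (G := G)
  have hT' : (insert z S)ᶜ.Nonempty := Set.nonempty_of_ncard_ne_zero (by omega)
  have hstar := hwed _ F (isMinlEDS_star hz hzS hS hmax hT') hF
  rw [Set.ncard_image_of_injective _ (Sym2.mkEmbedding z).injective] at hstar
  omega

theorem not_wellEdgeDominated_of_isUniversal_of_ne [Finite V] {G : SimpleGraph V} {z z' : V}
    (hz : G.IsUniversal z) (hz' : G.IsUniversal z') (hne : z ≠ z') (hcard : 4 < Nat.card V) :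
    ¬ WellEdgeDominated G :=
  not_wellEdgeDominated_of_isUniversal hz (S := {z'}) hne (Set.pairwise_singleton _ _)
    (fun _ _ hv => ⟨z', rfl, (hz' (Ne.symm hv)).symm⟩) (by simpa using hcard)

theorem Sym2.eq_mk_of_forall_mem {e : Sym2 V} (he : ¬e.IsDiag) {p q : V}
    (h : ∀ v ∈ e, v = p ∨ v = q) : e = s(p, q) := by
  induction e using Sym2.ind with | _ a b => ?_
  rw [Sym2.mk_isDiag_iff] at he
  rcases h a (Sym2.mem_mk_left a b) with rfl | rfl <;>
    rcases h b (Sym2.mem_mk_right a b) with rfl | rfl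
  all_goals first | exact absurd rfl he | rfl | exact Sym2.eq_swap

section CompleteGraphOnFour

variable [Finite V] (hV : Nat.card V = 4)
include hV

theorem two_le_ncard_of_isEDS_top {F : Set (Sym2 V)} (hF : IsEDS (⊤ : SimpleGraph V) F) :
    2 ≤ F.ncard := by
  by_contra! hlt
  have : 1 < (mVerts F)ᶜ.ncard := by
    have := ncard_mVerts_le F
    rw [Set.ncard_compl]; omega
  obtain ⟨x, hx, y, hy, hxy⟩ := (Set.one_lt_ncard).mp this
  rcases (isEDS_iff.mp hF).2 (show (⊤ : SimpleGraph V).Adj x y from hxy) with h | h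
  · exact hx h
  · exact hy h

theorem isEDS_top_pair {e f : Sym2 V} (he : ¬e.IsDiag) (hf : ¬f.IsDiag) (hef : e ≠ f) :
    IsEDS (⊤ : SimpleGraph V) {e, f} := by
  refine isEDS_iff.mpr ⟨?_, fun x y hxy => ?_⟩
  · rintro g (rfl | rfl) <;> simpa
  by_contra! hxy'
  obtain ⟨p, q, -, hpq⟩ : ∃ p q, p ≠ q ∧ ({x, y}ᶜ : Set V) = {p, q} := by
    rw [← Set.ncard_eq_two, Set.ncard_compl, Set.ncard_pair hxy, hV]
  have hpair {g : Sym2 V} (hg : g = e ∨ g = f) : ∀ v ∈ g, v = p ∨ v = q := by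
    intro v hv
    have : v ∈ ({x, y}ᶜ : Set V) := by
      rintro (rfl | rfl)
      exacts [hxy'.1 ⟨g, hg, hv⟩, hxy'.2 ⟨g, hg, hv⟩]
    simpa [hpq] using this
  exact hef ((Sym2.eq_mk_of_forall_mem he (hpair (.inl rfl))).trans
    (Sym2.eq_mk_of_forall_mem hf (hpair (.inr rfl))).symm)

theorem wellEdgeDominated_top_of_card_eq_four : WellEdgeDominated (⊤ : SimpleGraph V) := by
  intro F F' hF hF'
  suffices F.ncard ≤ 2 from this.trans (two_le_ncard_of_isEDS_top hV hF')
  by_contra! hgt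
  obtain ⟨e, he, f, hf, hef⟩ := (Set.one_lt_ncard).mp (by omega : 1 < F.ncard)
  have hsub : ({e, f} : Set (Sym2 V)) ⊂ F := by
    refine (Set.insert_subset he (Set.singleton_subset_iff.mpr hf)).ssubset_of_ne ?_
    rintro rfl
    rw [Set.ncard_pair hef] at hgt
    omega
  refine hF.2 _ hsub (isEDS_top_pair hV ?_ ?_ hef)
  · simpa using hF.1.1 he
  · simpa using hF.1.1 hf

end CompleteGraphOnFour

section MatchingNumberOne

variable [Finite V] {G : SimpleGraph V}

theorem exists_adj_of_matchNum_eq_one (hm : matchNum G = 1) : ∃ x y, G.Adj x y := by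
  obtain ⟨M, hM, hMcard⟩ := exists_isMatchingSet_ncard_eq_matchNum (G := G)
  obtain ⟨e, rfl⟩ := Set.ncard_eq_one.mp (hMcard.trans hm)
  induction e using Sym2.ind with | _ x y => exact ⟨x, y, hM.1 rfl⟩

theorem nontrivial_of_matchNum_eq_one (hm : matchNum G = 1) : Nontrivial V :=
  let ⟨x, y, hxy⟩ := exists_adj_of_matchNum_eq_one hm
  ⟨x, y, hxy.ne⟩

theorem adj_meet_of_matchNum_le_one (hm : matchNum G ≤ 1) {u v x y : V} (huv : G.Adj u v)
    (hxy : G.Adj x y) : u = x ∨ u = y ∨ v = x ∨ v = y := by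
  by_contra! h
  have hsingle : IsMatchingSet G {s(x, y)} :=
    ⟨by simpa using hxy, fun e he f hf hef => (hef (he.trans hf.symm)).elim⟩
  have hpair := hsingle.insert (e := s(u, v)) huv (by
    rintro f rfl w hw hw'
    simp only [Sym2.mem_iff] at hw hw'
    grind)
  have hne : s(u, v) ≠ s(x, y) := by
    intro h'
    simp only [Sym2.eq_iff] at h'
    grind
  have := hpair.ncard_le_matchNum
  rw [Set.ncard_pair hne] at this
  omega

end MatchingNumberOne

theorem eq_starGraph_of_forall_adj {G : SimpleGraph V} (hc : G.Connected) {a : V}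
    (h : ∀ ⦃u v⦄, G.Adj u v → u = a ∨ v = a) : G = starGraph a := by
  ext u v
  rw [starGraph_adj]
  refine ⟨fun huv => ⟨huv.ne, h huv⟩, ?_⟩
  rintro ⟨hne, hua⟩
  have : Nontrivial V := ⟨⟨u, v, hne⟩⟩
  wlog hu : u = a generalizing u v
  · exact (this v u hne.symm hua.symm (hua.resolve_left hu)).symm
  subst hu
  obtain ⟨w, hvw⟩ := hc.preconnected.exists_adj_of_nontrivial v
  rcases h hvw with rfl | rfl
  · exact absurd rfl hne
  · exact hvw.symm

section EdgesPairwiseMeet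

variable {G : SimpleGraph V} (hc : G.Connected)
  (hmeet : ∀ ⦃u v x y⦄, G.Adj u v → G.Adj x y → u = x ∨ u = y ∨ v = x ∨ v = y)
include hc hmeet

theorem eq_top_of_adj_meet_of_triangle {x y z : V} (hxy : G.Adj x y) (hyz : G.Adj y z)
    (hxz : G.Adj x z) : G = ⊤ ∧ Nat.card V = 3 := by
  have : Nontrivial V := ⟨⟨x, y, hxy.ne⟩⟩
  have hmem (v : V) : v = x ∨ v = y ∨ v = z := by
    obtain ⟨w, hvw⟩ := hc.preconnected.exists_adj_of_nontrivial v
    have := hmeet hvw hxy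
    have := hmeet hvw hyz
    have := hmeet hvw hxz
    grind [hxy.ne, hyz.ne, hxz.ne, hvw.ne]
  constructor
  · ext u v
    refine ⟨Adj.ne, fun huv => ?_⟩
    rcases hmem u with rfl | rfl | rfl <;> rcases hmem v with rfl | rfl | rfl <;>
      first | exact absurd rfl huv | assumption | exact Adj.symm ‹_›
  · rw [← Set.ncard_univ, Set.ncard_eq_three]
    exact ⟨x, y, z, hxy.ne, hxz.ne, hyz.ne, Set.eq_univ_of_forall hmem |>.symm⟩

theorem eq_starGraph_or_eq_top_of_adj_meet {x y : V} (hxy : G.Adj x y) :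
    (∃ a, G = starGraph a) ∨ (G = ⊤ ∧ Nat.card V = 3) := by
  by_cases hx : ∀ ⦃u v⦄, G.Adj u v → u = x ∨ v = x
  · exact .inl ⟨x, eq_starGraph_of_forall_adj hc hx⟩
  by_cases hy : ∀ ⦃u v⦄, G.Adj u v → u = y ∨ v = y
  · exact .inl ⟨y, eq_starGraph_of_forall_adj hc hy⟩
  push Not at hx hy
  obtain ⟨u, v, huv, hux, hvx⟩ := hx
  obtain ⟨u', v', huv', huy', hvy'⟩ := hy
  obtain ⟨z, hyz, hzx⟩ : ∃ z, G.Adj y z ∧ z ≠ x := by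
    rcases hmeet huv hxy with h | rfl | h | rfl
    exacts [absurd h hux, ⟨v, huv, hvx⟩, absurd h hvx, ⟨u, huv.symm, hux⟩]
  obtain ⟨w, hxw, hwy⟩ : ∃ w, G.Adj x w ∧ w ≠ y := by
    rcases hmeet huv' hxy with rfl | h | rfl | h
    exacts [⟨v', huv', hvy'⟩, absurd h huy', ⟨u', huv'.symm, huy'⟩, absurd h hvy']
  have hwz : w = z := by
    rcases hmeet hxw hyz with h | h | h | h
    exacts [absurd h hxy.ne, absurd h.symm hzx, absurd h hwy, h]
  exact .inr (eq_top_of_adj_meet_of_triangle hc hmeet hxy hyz (hwz ▸ hxw))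

end EdgesPairwiseMeet

theorem eq_starGraph_or_eq_top_of_matchNum_eq_one [Finite V] {G : SimpleGraph V}
    (hc : G.Connected) (hm : matchNum G = 1) :
    (∃ a, G = starGraph a) ∨ (G = ⊤ ∧ Nat.card V = 3) := by
  obtain ⟨x, y, hxy⟩ := exists_adj_of_matchNum_eq_one hm
  exact eq_starGraph_or_eq_top_of_adj_meet hc
    (fun _ _ _ _ => adj_meet_of_matchNum_le_one hm.le) hxy

theorem exists_isUniversal_of_matchNum_eq_one [Finite V] {G : SimpleGraph V}
    (hc : G.Connected) (hm : matchNum G = 1) : ∃ a, G.IsUniversal a := by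
  rcases eq_starGraph_or_eq_top_of_matchNum_eq_one hc hm with ⟨a, rfl⟩ | ⟨rfl, -⟩
  exacts [⟨a, isUniversal_starGraph_self⟩, ⟨hc.nonempty.some, .top⟩]

theorem eq_top_of_isUniversal_of_card_eq_two {G : SimpleGraph V} {a : V} (ha : G.IsUniversal a)
    (hV : Nat.card V = 2) : G = ⊤ := by
  obtain ⟨b, -, hb⟩ := (Nat.card_eq_two_iff' a).mp hV
  ext u v
  refine ⟨Adj.ne, fun huv => ?_⟩
  by_cases hu : u = a
  · exact hu ▸ ha (hu ▸ huv)
  by_cases hv : v = a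
  · exact (hv ▸ ha (hv ▸ huv.symm)).symm
  exact absurd ((hb u hu).trans (hb v hv).symm) huv

theorem nonempty_iso_top_fin_two_iff [Finite V] {G : SimpleGraph V} :
    Nonempty (G ≃g (⊤ : SimpleGraph (Fin 2))) ↔ G = ⊤ ∧ Nat.card V = 2 := by
  constructor
  · rintro ⟨e⟩
    refine ⟨?_, by simpa using Nat.card_congr e.toEquiv⟩
    ext u v
    simp [← e.map_adj_iff]
  · rintro ⟨rfl, hV⟩
    exact ⟨Iso.completeGraph ((Finite.equivFin V).trans (finCongr hV))⟩

section StrongProduct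

variable {G : SimpleGraph V} {H : SimpleGraph W}

theorem strongProd_top_top : strongProd (⊤ : SimpleGraph V) (⊤ : SimpleGraph W) = ⊤ := by
  ext p q
  simp [strongProd, em]

theorem isUniversal_strongProd {a : V} {b : W} (ha : G.IsUniversal a) (hb : H.IsUniversal b) :
    (strongProd G H).IsUniversal (a, b) := by
  rintro ⟨v, w⟩ hne
  refine ⟨hne, ?_, ?_⟩
  · by_cases h : a = v
    exacts [.inl h, .inr (ha h)]
  · by_cases h : b = w
    exacts [.inl h, .inr (hb h)]

theorem not_wellEdgeDominated_strongProd_starGraph [Finite V] [Finite W] [Nontrivial W] {a : V}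
    (ha : G.IsUniversal a) (b : W) (hV : 3 ≤ Nat.card V) :
    ¬ WellEdgeDominated (strongProd G (starGraph b)) := by
  have hS : (Prod.mk a '' {b}ᶜ).ncard + 1 = Nat.card W := by
    rw [Set.ncard_image_of_injective _ (Prod.mk_right_injective a), ← Set.ncard_singleton b,
      Set.ncard_compl_add_ncard]
  refine not_wellEdgeDominated_of_isUniversal (isUniversal_strongProd ha isUniversal_starGraph_self)
    (S := Prod.mk a '' {b}ᶜ) (fun ⟨w, hw, hwb⟩ => hw (Prod.ext_iff.mp hwb).2) ?_ ?_ ?_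
  · rintro _ ⟨w, hw, rfl⟩ _ ⟨w', hw', rfl⟩ hne ⟨-, -, h⟩
    simp_all
  · rintro ⟨x, w⟩ hne hS
    have hx : a ≠ x := by
      rintro rfl
      exact hS ⟨w, fun hw => hne (by simp_all), rfl⟩
    by_cases hw : w = b
    · obtain ⟨w', hw'⟩ := exists_ne b
      exact ⟨(a, w'), ⟨w', hw', rfl⟩,
        by simp [strongProd, Ne.symm hx, hw, hw'.symm, (ha hx).symm]⟩
    · exact ⟨(a, w), ⟨w, hw, rfl⟩, by simp [strongProd, Ne.symm hx, (ha hx).symm]⟩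
  · rw [Nat.card_prod]
    nlinarith [Nat.card_pos (α := W)]

theorem not_wellEdgeDominated_strongProd_top [Finite V] [Finite W] [Nontrivial V] {a : V}
    (ha : G.IsUniversal a) (hW : 3 ≤ Nat.card W) :
    ¬ WellEdgeDominated (strongProd G (⊤ : SimpleGraph W)) := by
  have : Nontrivial W := Finite.one_lt_card_iff_nontrivial.mp (by omega)
  obtain ⟨b, b', hbb'⟩ := exists_pair_ne W
  refine not_wellEdgeDominated_of_isUniversal_of_ne (isUniversal_strongProd ha (.top (v := b)))
    (isUniversal_strongProd ha .top) (by simpa using hbb') ?_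
  rw [Nat.card_prod]
  nlinarith [Finite.one_lt_card (α := V)]

theorem card_eq_two_of_wellEdgeDominated_strongProd_starGraph [Finite V] [Finite W]
    [Nontrivial V] [Nontrivial W] {a : V} (ha : G.IsUniversal a) {b : W}
    (hwed : WellEdgeDominated (strongProd G (starGraph b))) :
    Nat.card V = 2 ∧ Nat.card W = 2 := by
  have hV : Nat.card V = 2 := by
    by_contra
    have := Finite.one_lt_card (α := V)
    exact not_wellEdgeDominated_strongProd_starGraph ha b (by omega) hwed
  refine ⟨hV, ?_⟩
  by_contra
  have := Finite.one_lt_card (α := W)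
  obtain ⟨a', ha'⟩ := exists_ne a
  obtain rfl := eq_top_of_isUniversal_of_card_eq_two ha hV
  refine not_wellEdgeDominated_of_isUniversal_of_ne
    (isUniversal_strongProd (a := a) .top isUniversal_starGraph_self)
    (isUniversal_strongProd (a := a') .top isUniversal_starGraph_self)
    (by simpa using ha'.symm) ?_ hwed
  rw [Nat.card_prod, hV]
  omega

end StrongProduct

theorem stmt5 [Fintype V] [Fintype W] (G : SimpleGraph V) (H : SimpleGraph W)
    (hGc : G.Connected) (hHc : H.Connected)
    (hGm : matchNum G = 1) (hHm : matchNum H = 1) :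
    WellEdgeDominated (strongProd G H) ↔
      Nonempty (G ≃g (⊤ : SimpleGraph (Fin 2))) ∧
      Nonempty (H ≃g (⊤ : SimpleGraph (Fin 2))) := by
  simp only [nonempty_iso_top_fin_two_iff]
  refine ⟨fun hwed => ?_, fun ⟨⟨hG, hV⟩, ⟨hH, hW⟩⟩ => ?_⟩
  · have := nontrivial_of_matchNum_eq_one hGm
    have := nontrivial_of_matchNum_eq_one hHm
    obtain ⟨a, ha⟩ := exists_isUniversal_of_matchNum_eq_one hGc hGm
    rcases eq_starGraph_or_eq_top_of_matchNum_eq_one hHc hHm with ⟨b, rfl⟩ | ⟨rfl, hW⟩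
    · obtain ⟨hV, hW⟩ := card_eq_two_of_wellEdgeDominated_strongProd_starGraph ha hwed
      exact ⟨⟨eq_top_of_isUniversal_of_card_eq_two ha hV, hV⟩,
        ⟨eq_top_of_isUniversal_of_card_eq_two isUniversal_starGraph_self hW, hW⟩⟩
    · exact absurd hwed (not_wellEdgeDominated_strongProd_top ha hW.ge)
  · subst hG hH
    rw [strongProd_top_top]
    exact wellEdgeDominated_top_of_card_eq_four (by rw [Nat.card_prod, hV, hW])
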